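/- Let Ω ⊂ ℝⁿ be a bounded domain and μ a probability measure on the closure of Ω. Then sup{∫_Ω u dμ : u ∈ Lip_0(Ω), Lip(u) ≤ 1} = inf_{δ ∈ P(∂Ω)} W¹(μ,δ), where W¹(μ,δ) = sup{∫ u dμ − ∫ u dδ : u ∈ Lip(closure Ω), Lip(u) ≤ 1} and P(∂Ω) is the set of probability measures supported on ∂Ω. -/

import Mathlib

/-!
Both sides equal `∫ d(x, ∂Ω) dμ`. On the left, `d(·, ∂Ω)` is the largest 1-Lipschitz
function vanishing on `∂Ω`. On the right, testing `W¹(μ, δ)` against `u = d(·, ∂Ω)`, which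
integrates to zero against any `δ` carried by `∂Ω`, gives `≥`; conversely, pushing `μ` forward
along a measurable map `T` into `∂Ω` with `|x - T x| ≤ d(x, ∂Ω) + ε` gives a `δ` with
`W¹(μ, δ) ≤ ∫ |x - T x| dμ ≤ ∫ d(x, ∂Ω) dμ + ε`. No minimax argument is needed.
-/

open MeasureTheory Metric Set

/-- `sSup (kantorovichValues μ ν)` is `W¹(μ, ν)` in Kantorovich–Rubinstein dual form. -/
def kantorovichValues {α : Type*} [PseudoMetricSpace α] [MeasurableSpace α]
    (μ ν : Measure α) : Set ℝ :=
  {r | ∃ u : α → ℝ, LipschitzWith 1 u ∧ r = (∫ x, u x ∂μ) - (∫ x, u x ∂ν)}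

theorem LipschitzWith.sub_le_dist {α : Type*} [PseudoMetricSpace α] {u : α → ℝ}
    (hu : LipschitzWith 1 u) (x y : α) : u x - u y ≤ dist x y :=
  (Real.sub_le_dist _ _).trans (by simpa using hu.dist_le_mul x y)

theorem LipschitzWith.le_infDist {α : Type*} [PseudoMetricSpace α] {u : α → ℝ} {F : Set α}
    (hu : LipschitzWith 1 u) (hF : F.Nonempty) (hu0 : ∀ y ∈ F, u y = 0) (x : α) :
    u x ≤ infDist x F :=
  (Metric.le_infDist hF).2 fun y hy => by simpa [hu0 y hy] using hu.sub_le_dist x y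

section

variable {α : Type*} [MetricSpace α] [MeasurableSpace α] [BorelSpace α]
  {μ ν : Measure α} {K F : Set α}

theorem Continuous.integrable_of_ae_mem_isCompact {E : Type*} [NormedAddCommGroup E]
    [IsFiniteMeasure μ] {u : α → E} (hu : Continuous u) (hK : IsCompact K)
    (hμK : ∀ᵐ x ∂μ, x ∈ K) : Integrable u μ := by
  rw [← Measure.restrict_eq_self_of_ae_mem hμK]
  exact hu.continuousOn.integrableOn_compact hK

theorem sSup_integral_lipschitz_eq_integral_infDist [IsFiniteMeasure μ] (hF : F.Nonempty)
    (hK : IsCompact K) (hμK : ∀ᵐ x ∂μ, x ∈ K) :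
    sSup {r : ℝ | ∃ u : α → ℝ, LipschitzWith 1 u ∧ (∀ x ∈ F, u x = 0) ∧
      r = ∫ x, u x ∂μ} = ∫ x, infDist x F ∂μ := by
  refine IsGreatest.csSup_eq ⟨⟨_, lipschitz_infDist_pt F, fun x hx => infDist_zero_of_mem hx,
    rfl⟩, ?_⟩
  rintro _ ⟨u, hu, hu0, rfl⟩
  exact integral_mono (hu.continuous.integrable_of_ae_mem_isCompact hK hμK)
    ((continuous_infDist_pt F).integrable_of_ae_mem_isCompact hK hμK) (hu.le_infDist hF hu0)

theorem bddAbove_kantorovichValues [IsProbabilityMeasure μ] [IsProbabilityMeasure ν]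
    (hK : IsCompact K) (hμK : ∀ᵐ x ∂μ, x ∈ K) (hνK : ∀ᵐ x ∂ν, x ∈ K) :
    BddAbove (kantorovichValues μ ν) := by
  obtain ⟨y₀, hy₀⟩ := hμK.exists
  refine ⟨2 * diam K, ?_⟩
  rintro _ ⟨u, hu, rfl⟩
  have hdist : ∀ x ∈ K, ∀ y ∈ K, u x - u y ≤ diam K := fun x hx y hy =>
    (hu.sub_le_dist x y).trans (dist_le_diam_of_mem hK.isBounded hx hy)
  have hμbound : ∫ x, u x ∂μ ≤ u y₀ + diam K := by
    calc ∫ x, u x ∂μ ≤ ∫ _, (u y₀ + diam K) ∂μ :=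
          integral_mono_ae (hu.continuous.integrable_of_ae_mem_isCompact hK hμK)
            (integrable_const _) (hμK.mono fun x hx => by linarith [hdist x hx y₀ hy₀])
      _ = u y₀ + diam K := by simp
  have hνbound : u y₀ - diam K ≤ ∫ x, u x ∂ν := by
    calc u y₀ - diam K = ∫ _, (u y₀ - diam K) ∂ν := by simp
      _ ≤ ∫ x, u x ∂ν :=
          integral_mono_ae (integrable_const _)
            (hu.continuous.integrable_of_ae_mem_isCompact hK hνK)
            (hνK.mono fun x hx => by linarith [hdist y₀ hy₀ x hx])
  linarith

theorem integral_infDist_le_sSup_kantorovichValues [IsProbabilityMeasure μ]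
    [IsProbabilityMeasure ν] (hK : IsCompact K) (hF : IsCompact F) (hμK : ∀ᵐ x ∂μ, x ∈ K)
    (hνF : ∀ᵐ x ∂ν, x ∈ F) :
    ∫ x, infDist x F ∂μ ≤ sSup (kantorovichValues μ ν) := by
  have hbdd := bddAbove_kantorovichValues (hK.union hF) (hμK.mono fun _ => Or.inl)
    (hνF.mono fun _ => Or.inr)
  refine le_csSup hbdd ⟨_, lipschitz_infDist_pt F, ?_⟩
  rw [integral_eq_zero_of_ae (hνF.mono fun _ => infDist_zero_of_mem), sub_zero]

theorem sSup_kantorovichValues_map_le [IsFiniteMeasure μ] {T : α → α} {g : α → ℝ}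
    (hT : Measurable T) (hF : IsCompact F) (hTF : ∀ x, T x ∈ F) (hK : IsCompact K)
    (hμK : ∀ᵐ x ∂μ, x ∈ K) (hg : Integrable g μ) (hTg : ∀ x, dist x (T x) ≤ g x) :
    sSup (kantorovichValues μ (μ.map T)) ≤ ∫ x, g x ∂μ := by
  refine Real.sSup_le ?_ (integral_nonneg fun x => dist_nonneg.trans (hTg x))
  rintro _ ⟨u, hu, rfl⟩
  have hμu := hu.continuous.integrable_of_ae_mem_isCompact hK hμK
  have hTu : Integrable (fun x => u (T x)) μ := by
    refine (integrable_map_measure hu.continuous.aestronglyMeasurable hT.aemeasurable).1 ?_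
    refine hu.continuous.integrable_of_ae_mem_isCompact hF ?_
    exact (ae_map_iff hT.aemeasurable hF.isClosed.measurableSet).2 (.of_forall hTF)
  rw [integral_map hT.aemeasurable hu.continuous.aestronglyMeasurable, ← integral_sub hμu hTu]
  exact integral_mono (hμu.sub hTu) hg fun x => (hu.sub_le_dist x (T x)).trans (hTg x)

theorem IsCompact.exists_measurable_dist_le_infDist_add (hF : IsCompact F) (hFne : F.Nonempty)
    {ε : ℝ} (hε : 0 < ε) :
    ∃ T : α → α, Measurable T ∧ ∀ x, T x ∈ F ∧ dist x (T x) ≤ infDist x F + ε := by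
  obtain ⟨y₀, hy₀⟩ := hFne
  obtain ⟨t, htF, htfin, hcov⟩ := finite_approx_of_totallyBounded hF.totallyBounded ε hε
  obtain ⟨N, f, rfl⟩ := htfin.fin_embedding
  -- `T` is the nearest-point map onto `e 0, …, e N`: the finite `ε`-net `t` of `F`, padded by `y₀`
  let e : ℕ → α := fun k => if hk : k < N then f ⟨k, hk⟩ else y₀
  have heF : ∀ k, e k ∈ F := fun k => by
    unfold e; split_ifs
    exacts [htF (mem_range_self _), hy₀]
  refine ⟨SimpleFunc.nearestPt e N, (SimpleFunc.nearestPt e N).measurable,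
    fun x => ⟨heF _, ?_⟩⟩
  obtain ⟨p, hp, hpx⟩ := hF.exists_infDist_eq_dist ⟨y₀, hy₀⟩ x
  obtain ⟨_, ⟨i, rfl⟩, hpi⟩ := mem_iUnion₂.1 (hcov hp)
  have hei : e i = f i := dif_pos i.isLt
  calc dist x (SimpleFunc.nearestPt e N x) ≤ dist (e i) x := by
        rw [dist_comm, dist_edist, dist_edist]
        exact ENNReal.toReal_mono (edist_ne_top _ _) (SimpleFunc.edist_nearestPt_le e x i.isLt.le)
    _ ≤ dist (f i) p + dist p x := hei ▸ dist_triangle _ _ _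
    _ ≤ infDist x F + ε := by rw [hpx, dist_comm p]; linarith [mem_ball'.1 hpi]

theorem sInf_sSup_kantorovichValues_eq_integral_infDist [IsProbabilityMeasure μ]
    (hF : IsCompact F) (hFne : F.Nonempty) (hK : IsCompact K) (hμK : ∀ᵐ x ∂μ, x ∈ K) :
    sInf {w : ℝ | ∃ δ : Measure α, IsProbabilityMeasure δ ∧ δ Fᶜ = 0 ∧
      w = sSup (kantorovichValues μ δ)} = ∫ x, infDist x F ∂μ := by
  have hdist : Integrable (infDist · F) μ :=
    (continuous_infDist_pt F).integrable_of_ae_mem_isCompact hK hμK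
  refine IsGLB.csInf_eq ⟨?_, fun b hb => le_of_forall_pos_le_add fun ε hε => ?_⟩ ?_
  · rintro _ ⟨δ, hδ, hδF, rfl⟩
    exact integral_infDist_le_sSup_kantorovichValues hK hF hμK hδF
  · obtain ⟨T, hT, hTF⟩ := hF.exists_measurable_dist_le_infDist_add hFne hε
    have hδ := Measure.isProbabilityMeasure_map (μ := μ) hT.aemeasurable
    have hδF : μ.map T Fᶜ = 0 :=
      (ae_map_iff hT.aemeasurable hF.isClosed.measurableSet).2 (.of_forall fun x => (hTF x).1)
    calc b ≤ sSup (kantorovichValues μ (μ.map T)) := hb ⟨_, hδ, hδF, rfl⟩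
      _ ≤ ∫ x, (infDist x F + ε) ∂μ :=
          sSup_kantorovichValues_map_le hT hF (fun x => (hTF x).1) hK hμK
            (hdist.add (integrable_const ε)) fun x => (hTF x).2
      _ = ∫ x, infDist x F ∂μ + ε := by simp [integral_add hdist (integrable_const ε)]
  · obtain ⟨y₀, hy₀⟩ := hFne
    exact ⟨_, .dirac y₀, inferInstance, (ae_dirac_iff hF.isClosed.measurableSet).2 hy₀, rfl⟩

end

theorem dual_functional_eq_wasserstein_projection_general
    {n : ℕ} (Ω : Set (EuclideanSpace ℝ (Fin n)))
    (hΩb : Bornology.IsBounded Ω)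
    (μ : Measure (EuclideanSpace ℝ (Fin n))) [IsProbabilityMeasure μ]
    (hμ : μ (closure Ω)ᶜ = 0) :
    sSup {r : ℝ | ∃ u : EuclideanSpace ℝ (Fin n) → ℝ,
        LipschitzWith 1 u ∧ (∀ x ∈ frontier Ω, u x = 0) ∧ r = ∫ x, u x ∂μ} =
      sInf {w : ℝ | ∃ δ : Measure (EuclideanSpace ℝ (Fin n)),
        IsProbabilityMeasure δ ∧ δ (frontier Ω)ᶜ = 0 ∧
        w = sSup {r : ℝ | ∃ u : EuclideanSpace ℝ (Fin n) → ℝ,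
          LipschitzWith 1 u ∧ r = (∫ x, u x ∂μ) - (∫ x, u x ∂δ)}} := by
  rcases (frontier Ω).eq_empty_or_nonempty with hF | hF
  · -- `∂Ω = ∅` only for `n = 0`; then both sides are junk: `sSup univ = 0 = sInf ∅`.
    convert Real.sSup_univ.trans Real.sInf_empty.symm using 2
    · exact eq_univ_of_forall fun r =>
        ⟨fun _ => r, LipschitzWith.const' r, by simp [hF], by simp⟩
    · refine eq_empty_of_forall_notMem fun w ⟨δ, hδ, hδF, _⟩ => ?_
      simp [hF] at hδF
  · have hK : IsCompact (closure Ω) := hΩb.isCompact_closure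
    have hFc : IsCompact (frontier Ω) :=
      hK.of_isClosed_subset isClosed_frontier frontier_subset_closure
    rw [sSup_integral_lipschitz_eq_integral_infDist hF hK hμ]
    exact (sInf_sSup_kantorovichValues_eq_integral_infDist hFc hF hK hμ).symm

/-- For a probability measure `μ` on the closure of a bounded domain `Ω`,
`sup{∫ u dμ : u ∈ Lip_0(Ω), Lip(u) ≤ 1} = inf_{δ ∈ P(∂Ω)} W¹(μ,δ)`, where `W¹` is the
1-Wasserstein distance in Kantorovich–Rubinstein dual form. -/
theorem dual_functional_eq_wasserstein_projection
    {n : ℕ} (Ω : Set (EuclideanSpace ℝ (Fin n)))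
    (hΩo : IsOpen Ω) (hΩb : Bornology.IsBounded Ω) (hΩne : Ω.Nonempty)
    (μ : Measure (EuclideanSpace ℝ (Fin n))) [IsProbabilityMeasure μ]
    (hμ : μ (closure Ω)ᶜ = 0) :
    sSup {r : ℝ | ∃ u : EuclideanSpace ℝ (Fin n) → ℝ,
        LipschitzWith 1 u ∧ (∀ x ∈ frontier Ω, u x = 0) ∧ r = ∫ x, u x ∂μ} =
      sInf {w : ℝ | ∃ δ : Measure (EuclideanSpace ℝ (Fin n)),
        IsProbabilityMeasure δ ∧ δ (frontier Ω)ᶜ = 0 ∧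
        w = sSup {r : ℝ | ∃ u : EuclideanSpace ℝ (Fin n) → ℝ,
          LipschitzWith 1 u ∧ r = (∫ x, u x ∂μ) - (∫ x, u x ∂δ)}} :=
  dual_functional_eq_wasserstein_projection_general Ω hΩb μ hμ
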